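/- arXiv:1010.4552 — 9 statements merged into one kernel-verified Lean document; each statement's English description precedes it below -/
import Mathlib

section
/- Let X be a geodesic metric space, P a subset, and π_P : X → P a map satisfying (AP1) and (AP2) with constant C. Then for all x, y ∈ X, d(π_P(x), π_P(y)) ≤ d(x,y) + 6C, i.e., π_P is coarsely 1-Lipschitz. -/
open Metric Set

/-- `γ` restricted to `[a,b]` is a geodesic (isometric embedding of the interval). -/
def IsGeodesicOn {X : Type*} [MetricSpace X] (γ : ℝ → X) (a b : ℝ) : Prop :=
  ∀ s ∈ Set.Icc a b, ∀ t ∈ Set.Icc a b, dist (γ s) (γ t) = |s - t|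

/-- A geodesic metric space: any two points are joined by a geodesic. -/
def GeodesicSpace (X : Type*) [MetricSpace X] : Prop :=
  ∀ x y : X, ∃ γ : ℝ → X, γ 0 = x ∧ γ (dist x y) = y ∧ IsGeodesicOn γ 0 (dist x y)

section Aux

variable {X : Type*} [MetricSpace X] (P : Set X) (hP : P.Nonempty) (π : X → X) (C : ℝ)

/-- The projection nearly realizes the infimum distance. -/
lemma aux_proj_close (hP : P.Nonempty) (hmaps : ∀ x, π x ∈ P)
    (hAP1 : ∀ x, ∀ p ∈ P, dist x (π x) + dist (π x) p - C ≤ dist x p)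
    (y : X) : dist y (π y) ≤ infDist y P + C := by
  have h : dist y (π y) - C ≤ infDist y P := by
    by_contra hcon
    push_neg at hcon
    obtain ⟨p, hp, hlt⟩ := (infDist_lt_iff hP).mp hcon
    have h1 := hAP1 y p hp
    have h2 : (0:ℝ) ≤ dist (π y) p := dist_nonneg
    linarith
  linarith

/-- Points of a ball of radius `infDist x P` around `x` have close projections. -/
lemma aux_ball (hP : P.Nonempty) (hC : 0 ≤ C) (hmaps : ∀ x, π x ∈ P)
    (hAP1 : ∀ x, ∀ p ∈ P, dist x (π x) + dist (π x) p - C ≤ dist x p)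
    (hAP2 : ∀ x : X, Metric.diam (π '' Metric.closedBall x (Metric.infDist x P)) ≤ C)
    (x a b : X) (ha : dist a x ≤ infDist x P) (hb : dist b x ≤ infDist x P) :
    dist (π a) (π b) ≤ C := by
  set r := infDist x P with hr
  have hbdd : Bornology.IsBounded (π '' Metric.closedBall x r) := by
    apply (Metric.isBounded_closedBall (x := x) (r := 3 * r + 2 * C)).subset
    rintro _ ⟨a, ha, rfl⟩
    rw [Metric.mem_closedBall] at ha ⊢
    have h1 : dist a (π a) ≤ infDist a P + C := aux_proj_close P π C hP hmaps hAP1 a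
    have h2 : infDist a P ≤ dist a (π x) := infDist_le_dist_of_mem (hmaps x)
    have h3 : dist a (π x) ≤ dist a x + dist x (π x) := dist_triangle _ _ _
    have h4 : dist x (π x) ≤ r + C := aux_proj_close P π C hP hmaps hAP1 x
    have h5 : dist x (π a) ≤ dist x a + dist a (π a) := dist_triangle _ _ _
    have h6 : dist x a = dist a x := dist_comm _ _
    have h7 : dist (π a) x = dist x (π a) := dist_comm _ _
    linarith
  have hd : dist (π a) (π b) ≤ Metric.diam (π '' Metric.closedBall x r) :=
    Metric.dist_le_diam_of_mem hbdd ⟨a, ha, rfl⟩ ⟨b, hb, rfl⟩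
  exact hd.trans (hAP2 x)

/-- Main estimate under the normalization `infDist y P ≤ infDist x P`. -/
lemma aux_main (hP : P.Nonempty) (hX : GeodesicSpace X) (hC : 0 ≤ C) (hmaps : ∀ x, π x ∈ P)
    (hAP1 : ∀ x, ∀ p ∈ P, dist x (π x) + dist (π x) p - C ≤ dist x p)
    (hAP2 : ∀ x : X, Metric.diam (π '' Metric.closedBall x (Metric.infDist x P)) ≤ C)
    (x y : X) (hle : infDist y P ≤ infDist x P) :
    dist (π x) (π y) ≤ dist x y + 6 * C := by
  set dx := infDist x P with hdx
  set dy := infDist y P with hdy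
  set D := dist x y with hD
  have hdy0 : 0 ≤ dy := infDist_nonneg
  have hdx0 : 0 ≤ dx := infDist_nonneg
  have hD0 : 0 ≤ D := dist_nonneg
  by_cases hcase : D ≤ dy
  · -- x and y are both in the ball of radius dy around y
    have hxy' : dist x y ≤ infDist y P := hcase
    have := aux_ball P π C hP hC hmaps hAP1 hAP2 y x y hxy' (by simpa using hdy0)
    linarith
  · push_neg at hcase
    obtain ⟨γ, hγ0, hγD, hγ⟩ := hX x y
    set w := γ (D - dy) with hw
    have hmem1 : (0:ℝ) ∈ Set.Icc (0:ℝ) D := ⟨le_refl _, hD0⟩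
    have hmem2 : D - dy ∈ Set.Icc (0:ℝ) D := ⟨by linarith, by linarith⟩
    have hmem3 : D ∈ Set.Icc (0:ℝ) D := ⟨hD0, le_refl _⟩
    have hxw : dist x w = D - dy := by
      have := hγ 0 hmem1 (D - dy) hmem2
      rw [hγ0] at this
      rw [this, abs_of_nonpos (by linarith)]
      ring
    have hwy : dist w y = dy := by
      have := hγ (D - dy) hmem2 D hmem3
      rw [hγD] at this
      rw [this, abs_of_nonpos (by linarith)]
      ring
    -- w is in the ball of radius dy around y, so π w is close to π y
    have h1 : dist (π w) (π y) ≤ C :=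
      aux_ball P π C hP hC hmaps hAP1 hAP2 y w y (by rw [dist_comm] at hwy ⊢; exact hwy.le)
        (by simpa using hdy0)
    -- bound dist w (π w)
    have h2 : dist w (π w) ≤ infDist w P + C := aux_proj_close P π C hP hmaps hAP1 w
    have h3 : infDist w P ≤ dist w (π y) := infDist_le_dist_of_mem (hmaps y)
    have h4 : dist w (π y) ≤ dist w y + dist y (π y) := dist_triangle _ _ _
    have h5 : dist y (π y) ≤ dy + C := aux_proj_close P π C hP hmaps hAP1 y
    -- AP1 at x with p = π w
    have h6 := hAP1 x (π w) (hmaps w)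
    have h7 : dist x (π w) ≤ dist x w + dist w (π w) := dist_triangle _ _ _
    have h8 : dx ≤ dist x (π x) := infDist_le_dist_of_mem (hmaps x)
    have h9 : dist (π x) (π y) ≤ dist (π x) (π w) + dist (π w) (π y) := dist_triangle _ _ _
    linarith

end Aux

/-- almost-projections are coarsely 1-Lipschitz:
`d(π_P x, π_P y) ≤ d(x,y) + 6C`. -/
theorem stmt1 {X : Type*} [MetricSpace X] (hX : GeodesicSpace X)
    (P : Set X) (hP : P.Nonempty) (π : X → X) (C : ℝ) (hC : 0 ≤ C)
    (hmaps : ∀ x, π x ∈ P)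
    (hAP1 : ∀ x, ∀ p ∈ P, dist x (π x) + dist (π x) p - C ≤ dist x p)
    (hAP2 : ∀ x : X, Metric.diam (π '' Metric.closedBall x (Metric.infDist x P)) ≤ C)
    (x y : X) :
    dist (π x) (π y) ≤ dist x y + 6 * C := by
  rcases le_total (Metric.infDist y P) (Metric.infDist x P) with h | h
  · exact aux_main P π C hP hX hC hmaps hAP1 hAP2 x y h
  · have := aux_main P π C hP hX hC hmaps hAP1 hAP2 y x h
    rwa [dist_comm (π y) (π x), dist_comm y x] at this
end

section
/- Let δ₀ be a geodesic from q to p and δ₁ a (K,C)-quasi-geodesic starting at p, with d(q,p) = d(q, δ₁) (p realizes the distance from q to the image of δ₁). Then the concatenation of δ₀ and δ₁ is a (K',C')-quasi-geodesic, where K' and C' depend only on K and C; in fact one can take K' = max(2K+1, 3) and C' = KC. -/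
open Metric Set

/-- The concatenation of a path `δ₀` (reparametrized so that it ends at time 0)
with a path `δ₁` starting at time 0. -/
noncomputable def concatPath {X : Type*} (δ₀ δ₁ : ℝ → X) (d : ℝ) : ℝ → X :=
  fun u => if u ≤ 0 then δ₀ (u + d) else δ₁ u

/-!
If `x` lies on the geodesic `[q, p]` and `y` on `δ₁`, then `d(x, p) ≤ d(x, y)`, since otherwise
the path `q → x → y` would reach `δ₁` in less than `d(q, p)`. So `d(p, y) ≤ 2 d(x, y)`; this
bounds the parameter `t` of `y` by `2K d(x, y) + KC`, and hence the parameter gap `d(x, p) + t`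
by `(2K + 1) d(x, y) + KC`.
-/
def QuasiBounds (K C r d : ℝ) : Prop :=
  r / K - C ≤ d ∧ d ≤ K * r + C

lemma quasiBounds_self (r : ℝ) : QuasiBounds 1 0 r r := by
  simp [QuasiBounds]

lemma QuasiBounds.mono {K C K' C' r d : ℝ} (h : QuasiBounds K C r d) (hK : 0 < K)
    (hr : 0 ≤ r) (hKK' : K ≤ K') (hCC' : C ≤ C') : QuasiBounds K' C' r d := by
  obtain ⟨hlow, hup⟩ := h
  constructor
  · have : r / K' ≤ r / K := div_le_div_of_nonneg_left hr hK hKK'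
    linarith
  · linarith [mul_le_mul_of_nonneg_right hKK' hr]

lemma dist_le_dist_of_dist_add_dist_eq_of_le {X : Type*} [MetricSpace X] {q x p y : X}
    (hx : dist q x + dist x p = dist q p) (hy : dist q p ≤ dist q y) :
    dist x p ≤ dist x y := by
  linarith [dist_triangle q x y]

lemma quasiBounds_of_dist_le_dist {X : Type*} [MetricSpace X] {x p y : X} {K C M t : ℝ}
    (hK : 1 ≤ K) (hC : 0 ≤ C) (hM : 2 * K + 1 ≤ M) (ht : 0 ≤ t)
    (hpy : QuasiBounds K C t (dist p y)) (hxy : dist x p ≤ dist x y) :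
    QuasiBounds M (K * C) (dist x p + t) (dist x y) := by
  obtain ⟨hlow, hup⟩ := hpy
  have hK0 : 0 < K := by linarith
  have hM0 : 0 < M := by linarith
  have hpy_le : dist p y ≤ 2 * dist x y := by
    linarith [dist_triangle p x y, dist_comm p x]
  have ht_le : t ≤ 2 * K * dist x y + K * C := by
    have := (div_le_iff₀ hK0).mp (by linarith : t / K ≤ 2 * dist x y + C)
    linarith
  have hgap : dist x p + t ≤ (2 * K + 1) * dist x y + K * C := by linarith
  constructor
  · rw [sub_le_iff_le_add, div_le_iff₀ hM0]
    nlinarith [mul_le_mul_of_nonneg_right hM (dist_nonneg : 0 ≤ dist x y),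
      mul_le_mul_of_nonneg_right (by linarith : 1 ≤ M) (mul_nonneg hK0.le hC)]
  · nlinarith [dist_triangle x p y, dist_nonneg (x := x) (y := p),
      mul_le_mul_of_nonneg_right (by linarith : K ≤ M) ht]

/-- if `δ₀` is a geodesic from `q` to `p`, `δ₁` is a `(K,C)`-quasi-geodesic
starting at `p`, and `d(q,p) = d(q, δ₁)`, then the concatenation is a
`(max (2K+1) 3, K*C)`-quasi-geodesic. -/
theorem stmt3 {X : Type*} [MetricSpace X] (K C : ℝ) (hK : 1 ≤ K) (hC : 0 ≤ C)
    (q p : X) (δ₀ : ℝ → X) (hδ₀ : IsGeodesicOn δ₀ 0 (dist q p))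
    (hq : δ₀ 0 = q) (hp : δ₀ (dist q p) = p)
    (b : ℝ) (hb : 0 ≤ b) (δ₁ : ℝ → X) (hδ₁0 : δ₁ 0 = p)
    (hqg : ∀ s ∈ Set.Icc (0:ℝ) b, ∀ t ∈ Set.Icc (0:ℝ) b,
      |s - t| / K - C ≤ dist (δ₁ s) (δ₁ t) ∧ dist (δ₁ s) (δ₁ t) ≤ K * |s - t| + C)
    (hproj : dist q p = Metric.infDist q (δ₁ '' Set.Icc (0:ℝ) b)) :
    ∀ s ∈ Set.Icc (-(dist q p)) b, ∀ t ∈ Set.Icc (-(dist q p)) b,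
      |s - t| / max (2 * K + 1) 3 - K * C
          ≤ dist (concatPath δ₀ δ₁ (dist q p) s) (concatPath δ₀ δ₁ (dist q p) t) ∧
      dist (concatPath δ₀ δ₁ (dist q p) s) (concatPath δ₀ δ₁ (dist q p) t)
          ≤ max (2 * K + 1) 3 * |s - t| + K * C := by
  set D := dist q p
  set M := max (2 * K + 1) 3
  have hKM : K ≤ M := by linarith [le_max_left (2 * K + 1) 3]
  intro s hs t ht
  wlog hst : s ≤ t generalizing s t
  · simpa only [dist_comm, abs_sub_comm] using this t ht s hs (le_of_not_ge hst)
  change QuasiBounds M (K * C) |s - t| (dist (concatPath δ₀ δ₁ D s) (concatPath δ₀ δ₁ D t))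
  obtain ⟨hs₁, hs₂⟩ := hs
  obtain ⟨ht₁, ht₂⟩ := ht
  rcases le_or_gt t 0 with ht0 | ht0
  · rw [concatPath, concatPath, if_pos (hst.trans ht0), if_pos ht0,
      hδ₀ _ ⟨by linarith, by linarith⟩ _ ⟨by linarith, by linarith⟩, add_sub_add_right_eq_sub]
    exact (quasiBounds_self _).mono one_pos (abs_nonneg _) (by linarith) (by positivity)
  rcases le_or_gt s 0 with hs0 | hs0
  · have hsD : s + D ∈ Icc 0 D := ⟨by linarith, by linarith⟩
    have hxp : dist (δ₀ (s + D)) p = -s := by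
      rw [← hp, hδ₀ _ hsD _ ⟨dist_nonneg, le_rfl⟩, abs_of_nonpos (by linarith)]
      ring
    have hqx : dist q (δ₀ (s + D)) + dist (δ₀ (s + D)) p = D := by
      rw [← hq, hδ₀ _ ⟨le_rfl, dist_nonneg⟩ _ hsD, hxp, abs_of_nonpos (by linarith)]
      ring
    have hqy : D ≤ dist q (δ₁ t) :=
      hproj ▸ infDist_le_dist_of_mem (mem_image_of_mem _ ⟨ht0.le, ht₂⟩)
    have hpy : QuasiBounds K C t (dist p (δ₁ t)) := by
      have h := hqg 0 ⟨le_rfl, hb⟩ t ⟨ht0.le, ht₂⟩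
      rwa [hδ₁0, zero_sub, abs_neg, abs_of_pos ht0] at h
    rw [concatPath, concatPath, if_pos hs0, if_neg ht0.not_ge, abs_sub_comm,
      abs_of_nonneg (by linarith), show t - s = dist (δ₀ (s + D)) p + t by linarith]
    exact quasiBounds_of_dist_le_dist hK hC (le_max_left _ _) ht0.le hpy
      (dist_le_dist_of_dist_add_dist_eq_of_le hqx hqy)
  · rw [concatPath, concatPath, if_neg hs0.not_ge, if_neg ht0.not_ge]
    exact QuasiBounds.mono (hqg s ⟨hs0.le, hs₂⟩ t ⟨ht0.le, ht₂⟩) (by linarith) (abs_nonneg _)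
      hKM (le_mul_of_one_le_left hC hK)
end

section
/- Let X be a geodesic metric space, P ⊆ X, and π_P : X → P satisfying (AP1) and (AP2) with constant C. Let γ be a (1,c)-quasi-geodesic from x to a point y with d(y,P) ≤ r. If d(x,y) < d(x,P) − 2c, then d(y, π_P(x)) ≤ r + 2C ≤ 2r + 6C + 5c; and if d(x,y) ≥ d(x,P) − 2c, then any point y' on γ with d(x,P) − 2c ≤ d(x,y') ≤ d(x,P) satisfies d(y', π_P(x)) ≤ 2r + 6C + 5c. In particular γ intersects the closed ball of radius 2r + 6C + 5c around π_P(x). -/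
open Metric Set

/-- a `(1,c)`-quasi-geodesic from `x` to a point `y` with `d(y,P) ≤ r`
passes within `2r + 6C + 5c` of `π_P x`; more precisely, if `d(x,y) < d(x,P) - 2c` then
`d(y, π_P x) ≤ r + 2C ≤ 2r + 6C + 5c`, and otherwise any point `y' = γ t` with
`d(x,P) - 2c ≤ d(x,y') ≤ d(x,P)` satisfies `d(y', π_P x) ≤ 2r + 6C + 5c`. -/
theorem stmt4 {X : Type*} [MetricSpace X] (hX : GeodesicSpace X)
    (Pset : Set X) (hP : Pset.Nonempty) (π : X → X) (C : ℝ) (hC : 0 ≤ C)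
    (hmaps : ∀ x, π x ∈ Pset)
    (hAP1 : ∀ x, ∀ p ∈ Pset, dist x (π x) + dist (π x) p - C ≤ dist x p)
    (hAP2 : ∀ x : X, Metric.diam (π '' Metric.closedBall x (Metric.infDist x Pset)) ≤ C)
    (c r : ℝ) (hc : 0 ≤ c) (hr : 0 ≤ r)
    (a b : ℝ) (hab : a ≤ b) (γ : ℝ → X) (x y : X)
    (hγa : γ a = x) (hγb : γ b = y)
    (hqg : ∀ s ∈ Set.Icc a b, ∀ t ∈ Set.Icc a b,
      |s - t| - c ≤ dist (γ s) (γ t) ∧ dist (γ s) (γ t) ≤ |s - t| + c)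
    (hy : Metric.infDist y Pset ≤ r) :
    (dist x y < Metric.infDist x Pset - 2 * c →
      dist y (π x) ≤ r + 2 * C ∧ r + 2 * C ≤ 2 * r + 6 * C + 5 * c) ∧
    (∀ t ∈ Set.Icc a b,
      Metric.infDist x Pset - 2 * c ≤ dist x (γ t) →
      dist x (γ t) ≤ Metric.infDist x Pset →
      dist (γ t) (π x) ≤ 2 * r + 6 * C + 5 * c) ∧
    (∃ t ∈ Set.Icc a b, dist (γ t) (π x) ≤ 2 * r + 6 * C + 5 * c) := by
  set d : ℝ := Metric.infDist x Pset with hd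
  have hd0 : 0 ≤ d := Metric.infDist_nonneg
  -- every point is within infDist + C of its projection
  have hproj : ∀ w : X, dist w (π w) ≤ Metric.infDist w Pset + C := by
    intro w
    refine le_of_forall_pos_le_add fun ε hε => ?_
    obtain ⟨p, hpP, hp⟩ := (Metric.infDist_lt_iff ⟨π w, hmaps w⟩).1
      (lt_add_of_pos_right _ hε : Metric.infDist w Pset < Metric.infDist w Pset + ε)
    have h1 := hAP1 w p hpP
    have h2 : (0:ℝ) ≤ dist (π w) p := dist_nonneg
    linarith
  -- AP2 consequence: points of the ball of radius d around x have close projections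
  have hclose : ∀ u : X, dist x u ≤ d → dist (π x) (π u) ≤ C := by
    intro u hu
    have hsub : π '' Metric.closedBall x d ⊆ Metric.closedBall x (3 * d + C) := by
      rintro _ ⟨v, hv, rfl⟩
      rw [Metric.mem_closedBall] at hv ⊢
      have h1 : dist v (π v) ≤ Metric.infDist v Pset + C := hproj v
      have h2 : Metric.infDist v Pset ≤ d + dist v x := by
        have := Metric.infDist_le_infDist_add_dist (x := v) (y := x) (s := Pset)
        linarith
      have h3 : dist (π v) x ≤ dist (π v) v + dist v x := dist_triangle _ _ _
      have h4 : dist (π v) v = dist v (π v) := dist_comm _ _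
      linarith
    have hb : Bornology.IsBounded (π '' Metric.closedBall x d) :=
      (Metric.isBounded_closedBall (x := x) (r := 3 * d + C)).subset hsub
    have hx' : π x ∈ π '' Metric.closedBall x d :=
      ⟨x, by simpa [Metric.mem_closedBall] using hd0, rfl⟩
    have hu' : π u ∈ π '' Metric.closedBall x d :=
      ⟨u, by simpa [Metric.mem_closedBall, dist_comm] using hu, rfl⟩
    exact (Metric.dist_le_diam_of_mem hb hx' hu').trans (hAP2 x)
  have hxπ : dist x (π x) ≤ d + C := hproj x
  -- Part 1
  have part1 : dist x y ≤ d → dist y (π x) ≤ r + 2 * C := by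
    intro hxy
    have h1 : dist (π x) (π y) ≤ C := hclose y hxy
    have h2 : dist y (π y) ≤ r + C := (hproj y).trans (by linarith)
    have h3 : dist y (π x) ≤ dist y (π y) + dist (π y) (π x) := dist_triangle _ _ _
    have h4 : dist (π y) (π x) = dist (π x) (π y) := dist_comm _ _
    linarith
  -- Part 2 (key estimate)
  have key : ∀ t ∈ Set.Icc a b, d - 2 * c ≤ dist x (γ t) → dist x (γ t) ≤ d →
      dist (γ t) (π x) ≤ 2 * r + 6 * C + 5 * c := by
    intro t ht h1 h2
    have main : dist (γ t) (π x) ≤ 2 * r + 4 * C + 5 * c := by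
      refine le_of_forall_pos_le_add fun ε hε => ?_
      obtain ⟨p, hpP, hyp⟩ := (Metric.infDist_lt_iff ⟨π x, hmaps x⟩).1
        (lt_of_le_of_lt hy (by linarith : r < r + ε / 2))
      have haI : a ∈ Set.Icc a b := ⟨le_refl a, hab⟩
      have hbI : b ∈ Set.Icc a b := ⟨hab, le_refl b⟩
      -- quasi-geodesic estimates
      have hqtb := (hqg t ht b hbI).2
      have hqab := (hqg a haI b hbI).1
      have hqat := (hqg a haI t ht).2
      have e1 : |t - b| = b - t := by rw [abs_sub_comm]; exact abs_of_nonneg (by linarith [ht.2])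
      have e2 : |a - b| = b - a := by rw [abs_sub_comm]; exact abs_of_nonneg (by linarith)
      have e3 : |a - t| = t - a := by rw [abs_sub_comm]; exact abs_of_nonneg (by linarith [ht.1])
      rw [e1] at hqtb; rw [e2] at hqab; rw [e3] at hqat
      rw [hγa, hγb] at hqab; rw [hγa] at hqat
      have hγby : dist (γ t) y = dist (γ t) (γ b) := by rw [hγb]
      -- AP1 at γ t with p
      have hA1 := hAP1 (γ t) p hpP
      -- AP2: projections close
      have hB : dist (π x) (π (γ t)) ≤ C := hclose (γ t) h2
      -- triangles
      have tr1 : dist x p ≤ dist x (π x) + dist (π x) p := dist_triangle _ _ _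
      have tr2 : dist (π x) p ≤ dist (π x) (π (γ t)) + dist (π (γ t)) p := dist_triangle _ _ _
      have tr3 : dist (γ t) p ≤ dist (γ t) y + dist y p := dist_triangle _ _ _
      have tr4 : dist x y ≤ dist x p + dist p y := dist_triangle _ _ _
      have tr5 : dist (γ t) (π x) ≤ dist (γ t) (π (γ t)) + dist (π (γ t)) (π x) :=
        dist_triangle _ _ _
      have e4 : dist p y = dist y p := dist_comm _ _
      have e5 : dist (π (γ t)) (π x) = dist (π x) (π (γ t)) := dist_comm _ _
      linarith
    linarith
  refine ⟨fun h => ⟨part1 (by linarith), by linarith⟩, key, ?_⟩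
  -- Part 3: existence
  by_cases hd2c : d ≤ 2 * c
  · refine ⟨a, ⟨le_refl a, hab⟩, key a ⟨le_refl a, hab⟩ ?_ ?_⟩ <;>
      simp [hγa, dist_self] <;> linarith
  · push_neg at hd2c
    by_cases hxy : dist x y < d - 2 * c
    · exact ⟨b, ⟨hab, le_refl b⟩, by rw [hγb]; exact (part1 (by linarith)).trans (by linarith)⟩
    · push_neg at hxy
      have haI : a ∈ Set.Icc a b := ⟨le_refl a, hab⟩
      have hbI : b ∈ Set.Icc a b := ⟨hab, le_refl b⟩
      by_cases hc0 : c = 0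
      · -- genuine geodesic: take t = a + d
        subst hc0
        have hub := (hqg a haI b hbI).2
        have e2 : |a - b| = b - a := by rw [abs_sub_comm]; exact abs_of_nonneg (by linarith)
        rw [e2, hγa, hγb] at hub
        have hdb : a + d ≤ b := by linarith
        have htI : a + d ∈ Set.Icc a b := ⟨by linarith, hdb⟩
        have h1 := (hqg a haI (a + d) htI).1
        have h2 := (hqg a haI (a + d) htI).2
        have e3 : |a - (a + d)| = d := by
          rw [abs_sub_comm]; simpa using abs_of_nonneg hd0
        rw [e3, hγa] at h1 h2
        exact ⟨a + d, htI, key (a + d) htI (by linarith) (by linarith)⟩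
      · have hcpos : 0 < c := lt_of_le_of_ne hc (Ne.symm hc0)
        set S : Set ℝ := {t | t ∈ Set.Icc a b ∧ d - 2 * c ≤ dist x (γ t)} with hS
        have hbS : b ∈ S := ⟨hbI, by rw [hγb]; linarith⟩
        have hne : S.Nonempty := ⟨b, hbS⟩
        have hbdd : BddBelow S := ⟨a, fun t ht => ht.1.1⟩
        set t0 : ℝ := sInf S with ht0
        have ht0a : a ≤ t0 := le_csInf hne fun t ht => ht.1.1
        have ht0b : t0 ≤ b := csInf_le hbdd hbS
        obtain ⟨t1, ht1S, ht1lt⟩ := exists_lt_of_csInf_lt hne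
          (show sInf S < t0 + c / 2 by rw [← ht0]; linarith)
        have ht1ge : t0 ≤ t1 := csInf_le hbdd ht1S
        have ht1d : dist x (γ t1) ≤ d := by
          by_cases hta : a < t0
          · set t2 : ℝ := max a (t0 - c / 2) with ht2
            have ht2lt : t2 < t0 := max_lt hta (by linarith)
            have ht2ge : t0 - c / 2 ≤ t2 := le_max_right _ _
            have ht2I : t2 ∈ Set.Icc a b := ⟨le_max_left _ _, by linarith⟩
            have ht2nS : t2 ∉ S := fun h => absurd (csInf_le hbdd h) (not_le.2 ht2lt)
            have ht2f : dist x (γ t2) < d - 2 * c := by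
              by_contra h
              exact ht2nS ⟨ht2I, not_lt.1 h⟩
            have hq := (hqg t2 ht2I t1 ht1S.1).2
            have e1 : |t2 - t1| = t1 - t2 := by
              rw [abs_sub_comm]; exact abs_of_nonneg (by linarith)
            rw [e1] at hq
            have tr : dist x (γ t1) ≤ dist x (γ t2) + dist (γ t2) (γ t1) := dist_triangle _ _ _
            linarith
          · have ht0eq : t0 = a := le_antisymm (not_lt.1 hta) ht0a
            have hq := (hqg a haI t1 ht1S.1).2
            have e1 : |a - t1| = t1 - a := by
              rw [abs_sub_comm]; exact abs_of_nonneg (by linarith [ht1S.1.1])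
            rw [e1, hγa] at hq
            linarith
        exact ⟨t1, ht1S.1, key t1 ht1S.1 ht1S.2 ht1d⟩
end

section
/- Let X be a geodesic metric space, P ⊆ X, and π_P satisfying (AP1) and (AP2) with constant C. Let γ be a geodesic starting at x that intersects the closed r-neighborhood N_r(P) of P, for some r ≥ 2C. If y is the first point on γ lying in N_r(P), then d(y, π_P(x)) ≤ 8r + 22C. -/
open Metric Set

section
variable {X : Type*} [MetricSpace X]

lemma aux_bnd (Pset : Set X) (hP : Pset.Nonempty) (π : X → X) (C : ℝ)
    (hAP1 : ∀ x, ∀ p ∈ Pset, dist x (π x) + dist (π x) p - C ≤ dist x p) (z : X) :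
    dist z (π z) ≤ Metric.infDist z Pset + C := by
  by_contra h
  push_neg at h
  have h2 : Metric.infDist z Pset < dist z (π z) - C := by linarith
  obtain ⟨p, hp, hdp⟩ := (Metric.infDist_lt_iff hP).1 h2
  have := hAP1 z p hp
  have := dist_nonneg (x := π z) (y := p)
  linarith

lemma aux_hop (Pset : Set X) (hP : Pset.Nonempty) (π : X → X) (C : ℝ) (hC : 0 ≤ C)
    (hmaps : ∀ x, π x ∈ Pset)
    (hAP1 : ∀ x, ∀ p ∈ Pset, dist x (π x) + dist (π x) p - C ≤ dist x p)
    (hAP2 : ∀ x : X, Metric.diam (π '' Metric.closedBall x (Metric.infDist x Pset)) ≤ C)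
    (z w : X) (hzw : dist z w ≤ Metric.infDist z Pset) :
    dist (π z) (π w) ≤ C := by
  set R := Metric.infDist z Pset with hR
  have hbd : Bornology.IsBounded (π '' Metric.closedBall z R) := by
    apply (Metric.isBounded_closedBall (x := π z) (r := R + dist z (π z) + C)).subset
    rintro v ⟨w', hw', rfl⟩
    rw [Metric.mem_closedBall] at hw' ⊢
    have h1 := hAP1 w' (π z) (hmaps z)
    have h2 : dist w' (π z) ≤ dist w' z + dist z (π z) := dist_triangle _ _ _
    have h3 : (0:ℝ) ≤ dist w' (π w') := dist_nonneg
    have h4 : dist (π w') (π z) ≤ dist w' (π z) + C := by linarith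
    calc dist (π w') (π z) ≤ dist w' (π z) + C := h4
      _ ≤ R + dist z (π z) + C := by
          have : dist w' z = dist w' z := rfl
          nlinarith [dist_comm w' z ▸ hw']
  have hz : π z ∈ π '' Metric.closedBall z R :=
    ⟨z, by simp [Metric.mem_closedBall, hR ▸ Metric.infDist_nonneg], rfl⟩
  have hw : π w ∈ π '' Metric.closedBall z R :=
    ⟨w, by rw [Metric.mem_closedBall, dist_comm]; exact hzw, rfl⟩
  exact (Metric.dist_le_diam_of_mem hbd hz hw).trans (hAP2 z)

end


section
variable {X : Type*} [MetricSpace X]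

lemma aux_main_s5 (Pset : Set X) (hP : Pset.Nonempty) (π : X → X) (C : ℝ) (hC : 0 ≤ C)
    (hmaps : ∀ x, π x ∈ Pset)
    (hAP1 : ∀ x, ∀ p ∈ Pset, dist x (π x) + dist (π x) p - C ≤ dist x p)
    (hAP2 : ∀ x : X, Metric.diam (π '' Metric.closedBall x (Metric.infDist x Pset)) ≤ C)
    (r : ℝ) (hr : 2 * C ≤ r) (hrpos : 0 < r)
    (ℓ : ℝ) (γ : ℝ → X) (hgeo : IsGeodesicOn γ 0 ℓ)
    (t₀ : ℝ) (ht₀ : t₀ ∈ Set.Icc 0 ℓ)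
    (hhit : Metric.infDist (γ t₀) Pset ≤ r)
    (hfirst : ∀ t ∈ Set.Icc 0 ℓ, t < t₀ → r < Metric.infDist (γ t) Pset) :
    dist (γ t₀) (π (γ 0)) ≤ 2 * r + 7 * C := by
  have hsub : Set.Icc 0 t₀ ⊆ Set.Icc 0 ℓ := Set.Icc_subset_Icc le_rfl ht₀.2
  have dgeo : ∀ a ∈ Set.Icc 0 t₀, ∀ b ∈ Set.Icc 0 t₀, dist (γ a) (γ b) = |a - b| :=
    fun a ha b hb => hgeo a (hsub ha) b (hsub hb)
  -- chain lemma
  have chain : ∀ n : ℕ, ∀ a ∈ Set.Icc 0 t₀, t₀ - a ≤ n * r →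
      dist (π (γ a)) (π (γ t₀)) ≤ n * C := by
    intro n
    induction n with
    | zero =>
      intro a ha hle
      have : a = t₀ := le_antisymm ha.2 (by push_cast at hle; linarith)
      simp [this]
    | succ n ih =>
      intro a ha hle
      rcases eq_or_lt_of_le ha.2 with heq | hlt
      · rw [heq]
        simp
        positivity
      · have hfa : r < Metric.infDist (γ a) Pset := hfirst a (hsub ha) hlt
        set F := Metric.infDist (γ a) Pset with hF
        set a' := min (a + F) t₀ with ha'
        have ha'mem : a' ∈ Set.Icc 0 t₀ :=
          ⟨le_min (by linarith [ha.1]) ht₀.1, min_le_right _ _⟩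
        have haa' : a ≤ a' := le_min (by linarith) hlt.le
        have hda : dist (γ a) (γ a') = a' - a := by
          rw [dgeo a ha a' ha'mem, abs_sub_comm, abs_of_nonneg (by linarith)]
        have hhop : dist (π (γ a)) (π (γ a')) ≤ C := by
          apply aux_hop Pset hP π C hC hmaps hAP1 hAP2
          rw [hda, ← hF]
          have := min_le_left (a + F) t₀
          linarith
        have hih : dist (π (γ a')) (π (γ t₀)) ≤ n * C := by
          apply ih a' ha'mem
          rcases le_total (a + F) t₀ with hc | hc
          · have : a' = a + F := min_eq_left hc
            push_cast at hle ⊢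
            rw [this]; linarith
          · have : a' = t₀ := min_eq_right hc
            rw [this]
            have h0 : (0:ℝ) ≤ (n:ℝ) * r := by positivity
            linarith
        calc dist (π (γ a)) (π (γ t₀)) ≤ dist (π (γ a)) (π (γ a')) + dist (π (γ a')) (π (γ t₀)) :=
              dist_triangle _ _ _
          _ ≤ C + n * C := add_le_add hhop hih
          _ = (n + 1 : ℕ) * C := by push_cast; ring
  -- main pointwise bound
  have main : ∀ a ∈ Set.Icc 0 t₀, dist (π (γ a)) (π (γ t₀)) ≤ r + 6 * C := by
    intro a ha
    set F := Metric.infDist (γ a) Pset with hF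
    rcases le_or_gt (t₀ - a) F with hcase | hcase
    · have : dist (π (γ a)) (π (γ t₀)) ≤ C := by
        apply aux_hop Pset hP π C hC hmaps hAP1 hAP2
        rw [dgeo a ha t₀ ⟨ht₀.1, le_refl _⟩, abs_sub_comm, abs_of_nonneg (by linarith [ha.2])]
        exact hcase
      linarith
    · have hlt : a < t₀ := by
        have := Metric.infDist_nonneg (x := γ a) (s := Pset)
        rw [← hF] at this; linarith
      have hfa : r < F := hfirst a (hsub ha) hlt
      set a' := a + F with ha'
      have ha'mem : a' ∈ Set.Icc 0 t₀ := ⟨by linarith [ha.1], by linarith⟩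
      have hda : dist (γ a) (γ a') = F := by
        rw [dgeo a ha a' ha'mem, abs_sub_comm, abs_of_nonneg (by linarith)]
        ring
      have hhop : dist (π (γ a)) (π (γ a')) ≤ C := by
        apply aux_hop Pset hP π C hC hmaps hAP1 hAP2
        rw [hda]
      -- lower bound on dist of projections
      have hb1 : dist (γ a) (π (γ a)) ≤ F + C := aux_bnd Pset hP π C hAP1 (γ a)
      have hb2 : dist (γ t₀) (π (γ t₀)) ≤ r + C :=
        (aux_bnd Pset hP π C hAP1 (γ t₀)).trans (by linarith)
      have hdat : dist (γ a) (γ t₀) = t₀ - a := by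
        rw [dgeo a ha t₀ ⟨ht₀.1, le_refl _⟩, abs_sub_comm, abs_of_nonneg (by linarith)]
      have hlow : t₀ - a' ≤ dist (π (γ a)) (π (γ t₀)) + r + 2 * C := by
        have htri : dist (γ a) (γ t₀) ≤ dist (γ a) (π (γ a)) + dist (π (γ a)) (π (γ t₀)) +
            dist (π (γ t₀)) (γ t₀) := dist_triangle4 _ _ _ _
        rw [hdat] at htri
        rw [dist_comm (π (γ t₀))] at htri
        simp only [ha']
        linarith
      -- chain bound at a'
      set u := t₀ - a' with hu
      have hu0 : 0 ≤ u := by simp only [hu]; linarith [ha'mem.2]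
      have hchain : dist (π (γ a')) (π (γ t₀)) ≤ u / 2 + C := by
        have h1 := chain ⌈u / r⌉₊ a' ha'mem (by
          have h := Nat.le_ceil (u / r)
          calc t₀ - a' = u := rfl
            _ = u / r * r := by field_simp
            _ ≤ (⌈u / r⌉₊ : ℝ) * r := by
                apply mul_le_mul_of_nonneg_right h hrpos.le)
        have h2 : (⌈u / r⌉₊ : ℝ) < u / r + 1 := Nat.ceil_lt_add_one (by positivity)
        have h3 : (⌈u / r⌉₊ : ℝ) * C ≤ (u / r + 1) * C := by nlinarith
        have h4 : u / r * C ≤ u / 2 := by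
          rw [div_mul_eq_mul_div, div_le_iff₀ hrpos]
          nlinarith
        calc dist (π (γ a')) (π (γ t₀)) ≤ (⌈u / r⌉₊ : ℝ) * C := h1
          _ ≤ (u / r + 1) * C := h3
          _ = u / r * C + C := by ring
          _ ≤ u / 2 + C := by linarith
      have hfinal : dist (π (γ a)) (π (γ t₀)) ≤ C + (u / 2 + C) := by
        calc dist (π (γ a)) (π (γ t₀)) ≤ dist (π (γ a)) (π (γ a')) +
            dist (π (γ a')) (π (γ t₀)) := dist_triangle _ _ _
          _ ≤ C + (u / 2 + C) := add_le_add hhop hchain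
      linarith
  -- conclude
  have h0 : (0:ℝ) ∈ Set.Icc 0 t₀ := ⟨le_refl _, ht₀.1⟩
  have hm := main 0 h0
  have hb : dist (γ t₀) (π (γ t₀)) ≤ r + C :=
    (aux_bnd Pset hP π C hAP1 (γ t₀)).trans (by linarith)
  calc dist (γ t₀) (π (γ 0)) ≤ dist (γ t₀) (π (γ t₀)) + dist (π (γ t₀)) (π (γ 0)) :=
        dist_triangle _ _ _
    _ ≤ (r + C) + (r + 6 * C) := add_le_add hb (dist_comm (π (γ 0)) (π (γ t₀)) ▸ hm)
    _ = 2 * r + 7 * C := by ring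

end


/-- if a geodesic starting at `x` meets the closed `r`-neighborhood of
`P` (`r ≥ 2C`) for the first time at `y = γ t₀`, then `d(y, π_P x) ≤ 8r + 22C`. -/
theorem stmt5 {X : Type*} [MetricSpace X] (hX : GeodesicSpace X)
    (Pset : Set X) (hP : Pset.Nonempty) (π : X → X) (C : ℝ) (hC : 0 ≤ C)
    (hmaps : ∀ x, π x ∈ Pset)
    (hAP1 : ∀ x, ∀ p ∈ Pset, dist x (π x) + dist (π x) p - C ≤ dist x p)
    (hAP2 : ∀ x : X, Metric.diam (π '' Metric.closedBall x (Metric.infDist x Pset)) ≤ C)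
    (r : ℝ) (hr : 2 * C ≤ r)
    (ℓ : ℝ) (hℓ : 0 ≤ ℓ) (γ : ℝ → X) (x : X)
    (hgeo : IsGeodesicOn γ 0 ℓ) (hγ0 : γ 0 = x)
    (t₀ : ℝ) (ht₀ : t₀ ∈ Set.Icc 0 ℓ)
    (hhit : Metric.infDist (γ t₀) Pset ≤ r)
    (hfirst : ∀ t ∈ Set.Icc 0 ℓ, t < t₀ → r < Metric.infDist (γ t) Pset) :
    dist (γ t₀) (π x) ≤ 8 * r + 22 * C := by
  subst hγ0
  have hr0 : (0:ℝ) ≤ r := le_trans (by linarith) hr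
  rcases lt_or_eq_of_le hr0 with hrpos | hrzero
  · have := aux_main_s5 Pset hP π C hC hmaps hAP1 hAP2 r hr hrpos ℓ γ hgeo t₀ ht₀ hhit hfirst
    linarith
  · -- r = 0, hence C = 0
    have hC0 : C = 0 := by linarith
    rcases eq_or_lt_of_le ht₀.1 with ht00 | htpos
    · rw [← ht00]
      have h1 := aux_bnd Pset hP π C hAP1 (γ 0)
      have h2 : Metric.infDist (γ 0) Pset ≤ r := ht00 ▸ hhit
      linarith
    · apply le_of_forall_pos_le_add
      intro ε hε
      set a := max 0 (t₀ - ε/4) with ha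
      have ha0 : 0 ≤ a := le_max_left _ _
      have hat : a < t₀ := max_lt htpos (by linarith)
      have hta : t₀ - a ≤ ε/4 := by
        have := le_max_right 0 (t₀ - ε/4)
        linarith
      have haℓ : a ≤ ℓ := le_trans hat.le ht₀.2
      -- continuity of t ↦ infDist (γ t) Pset on [0, ℓ]
      have hγcont : ContinuousOn γ (Set.Icc 0 ℓ) := by
        apply LipschitzOnWith.continuousOn (K := 1)
        apply LipschitzOnWith.of_dist_le_mul
        intro s hs t ht
        rw [hgeo s hs t ht, Real.dist_eq, NNReal.coe_one, one_mul]
      have hlip : ContinuousOn (fun t => Metric.infDist (γ t) Pset) (Set.Icc 0 ℓ) :=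
        (Metric.continuous_infDist_pt Pset).comp_continuousOn hγcont
      -- minimum of infDist on [0, a]
      obtain ⟨tm, htm, hmin⟩ := isCompact_Icc.exists_isMinOn (Set.nonempty_Icc.2 ha0)
        (hlip.mono (Set.Icc_subset_Icc le_rfl haℓ))
      have hmin' : ∀ t ∈ Set.Icc 0 a, Metric.infDist (γ tm) Pset ≤ Metric.infDist (γ t) Pset :=
        fun t ht => hmin ht
      have hmpos : 0 < Metric.infDist (γ tm) Pset := by
        have := hfirst tm ⟨htm.1, le_trans htm.2 haℓ⟩ (lt_of_le_of_lt htm.2 hat)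
        linarith [hrzero ▸ this]
      set r' := Metric.infDist (γ tm) Pset / 2 with hr'
      have hr'pos : 0 < r' := by positivity
      -- first entry time at level r'
      set K := Set.Icc a t₀ ∩ (fun t => Metric.infDist (γ t) Pset) ⁻¹' Set.Iic r' with hK
      have hKclosed : IsClosed K := by
        apply ContinuousOn.preimage_isClosed_of_isClosed
          (hlip.mono (Set.Icc_subset_Icc ha0 ht₀.2)) isClosed_Icc isClosed_Iic
      have hKne : K.Nonempty := ⟨t₀, ⟨hat.le, le_rfl⟩, by
        simp only [Set.mem_preimage, Set.mem_Iic]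
        calc Metric.infDist (γ t₀) Pset ≤ r := hhit
          _ ≤ r' := by rw [← hrzero]; exact hr'pos.le⟩
      have hKbdd : BddBelow K := ⟨a, fun t ht => ht.1.1⟩
      set t₁ := sInf K with ht₁
      have ht₁K : t₁ ∈ K := hKclosed.csInf_mem hKne hKbdd
      have ht₁a : a ≤ t₁ := ht₁K.1.1
      have ht₁t₀ : t₁ ≤ t₀ := ht₁K.1.2
      have ht₁mem : t₁ ∈ Set.Icc 0 ℓ := ⟨le_trans ha0 ht₁a, le_trans ht₁t₀ ht₀.2⟩
      have hhit' : Metric.infDist (γ t₁) Pset ≤ r' := ht₁K.2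
      have hfirst' : ∀ t ∈ Set.Icc 0 ℓ, t < t₁ → r' < Metric.infDist (γ t) Pset := by
        intro t htl htlt
        rcases le_or_gt t a with hta' | hta'
        · have := hmin' t ⟨htl.1, hta'⟩
          linarith
        · by_contra hcon
          push_neg at hcon
          have htK : t ∈ K := ⟨⟨hta'.le, le_trans htlt.le ht₁t₀⟩, hcon⟩
          exact absurd (csInf_le hKbdd htK) (not_le.2 htlt)
      have haux := aux_main_s5 Pset hP π C hC hmaps hAP1 hAP2 r' (by rw [hC0]; linarith)
        hr'pos ℓ γ hgeo t₁ ht₁mem hhit' hfirst'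
      -- assemble
      have hd1 : dist (γ t₀) (γ t₁) = t₀ - t₁ := by
        rw [hgeo t₀ ht₀ t₁ ht₁mem, abs_of_nonneg (by linarith)]
      have hr'small : 2 * r' ≤ ε/4 := by
        have h1 := hmin' a ⟨ha0, le_rfl⟩
        have h2 : Metric.infDist (γ a) Pset ≤ Metric.infDist (γ t₀) Pset + dist (γ a) (γ t₀) :=
          Metric.infDist_le_infDist_add_dist
        have h3 : dist (γ a) (γ t₀) = t₀ - a := by
          rw [hgeo a ⟨ha0, haℓ⟩ t₀ ht₀, abs_sub_comm, abs_of_nonneg (by linarith)]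
        have h4 : Metric.infDist (γ t₀) Pset ≤ 0 := hrzero ▸ hhit
        rw [h3] at h2
        simp only [hr']
        linarith
      calc dist (γ t₀) (π (γ 0)) ≤ dist (γ t₀) (γ t₁) + dist (γ t₁) (π (γ 0)) :=
            dist_triangle _ _ _
        _ ≤ (t₀ - t₁) + (2 * r' + 7 * C) := by rw [hd1]; linarith
        _ ≤ ε/4 + (ε/4 + 0) := by
            have : t₀ - t₁ ≤ ε/4 := by linarith
            linarith [hC0]
        _ ≤ 8 * r + 22 * C + ε := by rw [← hrzero, hC0]; linarith
end

section
/- Let X be a geodesic metric space, P ⊆ X, and π_P satisfying (AP1) and (AP2) with constant C. Let γ be a geodesic from x₁ to x₂. Then for each r ≥ 2C, diam(γ ∩ N_r(P)) ≤ d(π_P(x₁), π_P(x₂)) + 18r + 62C. -/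
open Metric Set

/-- for a geodesic `γ` from `x₁` to `x₂` and `r ≥ 2C`,
`diam (γ ∩ N_r(P)) ≤ d(π_P x₁, π_P x₂) + 18r + 62C`. -/
theorem stmt7 {X : Type*} [MetricSpace X] (hX : GeodesicSpace X)
    (Pset : Set X) (hP : Pset.Nonempty) (π : X → X) (C : ℝ) (hC : 0 ≤ C)
    (hmaps : ∀ x, π x ∈ Pset)
    (hAP1 : ∀ x, ∀ p ∈ Pset, dist x (π x) + dist (π x) p - C ≤ dist x p)
    (hAP2 : ∀ x : X, Metric.diam (π '' Metric.closedBall x (Metric.infDist x Pset)) ≤ C)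
    (r : ℝ) (hr : 2 * C ≤ r)
    (ℓ : ℝ) (hℓ : 0 ≤ ℓ) (γ : ℝ → X) (x₁ x₂ : X)
    (hgeo : IsGeodesicOn γ 0 ℓ) (hγ0 : γ 0 = x₁) (hγℓ : γ ℓ = x₂) :
    ∀ s ∈ Set.Icc 0 ℓ, ∀ t ∈ Set.Icc 0 ℓ,
      Metric.infDist (γ s) Pset ≤ r → Metric.infDist (γ t) Pset ≤ r →
      dist (γ s) (γ t) ≤ dist (π x₁) (π x₂) + 18 * r + 62 * C := by
  have hr0 : 0 ≤ r := le_trans (by linarith) hr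
  have hℓdist : dist x₁ x₂ = ℓ := by
    have h := hgeo 0 ⟨le_refl 0, hℓ⟩ ℓ ⟨hℓ, le_refl ℓ⟩
    rw [hγ0, hγℓ] at h
    rw [h, abs_of_nonpos (by linarith)]; ring
  have key : ∀ s ∈ Set.Icc 0 ℓ, ∀ t ∈ Set.Icc 0 ℓ, s ≤ t →
      Metric.infDist (γ s) Pset ≤ r → Metric.infDist (γ t) Pset ≤ r →
      dist (γ s) (γ t) ≤ dist (π x₁) (π x₂) + 2 * r + 2 * C := by
    intro s hs t ht hst h1 h2
    have hd : dist (γ s) (γ t) = t - s := by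
      rw [hgeo s hs t ht, abs_of_nonpos (by linarith)]; ring
    rw [hd]
    refine le_of_forall_pos_le_add ?_
    intro ε hε
    obtain ⟨p, hp, hps⟩ := (Metric.infDist_lt_iff hP).1
      (lt_of_le_of_lt h1 (by linarith : r < r + ε / 2))
    obtain ⟨q, hq, hqt⟩ := (Metric.infDist_lt_iff hP).1
      (lt_of_le_of_lt h2 (by linarith : r < r + ε / 2))
    have hs1 : dist x₁ (γ s) = s := by
      have h := hgeo 0 ⟨le_refl 0, hℓ⟩ s hs
      rw [hγ0] at h
      rw [h, abs_of_nonpos (by linarith [hs.1])]; ring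
    have ht2 : dist (γ t) x₂ = ℓ - t := by
      have h := hgeo t ht ℓ ⟨hℓ, le_refl ℓ⟩
      rw [hγℓ] at h
      rw [h, abs_of_nonpos (by linarith [ht.2])]; ring
    -- from AP1 at x₁ with p, and triangle inequality:
    have hA1 := hAP1 x₁ p hp
    have htri1 : dist x₁ p ≤ dist x₁ (γ s) + dist (γ s) p := dist_triangle _ _ _
    have hA2 := hAP1 x₂ q hq
    have htri2 : dist x₂ q ≤ dist x₂ (γ t) + dist (γ t) q := dist_triangle _ _ _
    have hcomm : dist x₂ (γ t) = dist (γ t) x₂ := dist_comm _ _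
    have htriℓ : dist x₁ x₂ ≤ dist x₁ (π x₁) + dist (π x₁) (π x₂) + dist (π x₂) x₂ :=
      dist_triangle4 _ _ _ _
    have hc2 : dist (π x₂) x₂ = dist x₂ (π x₂) := dist_comm _ _
    have hn1 : 0 ≤ dist (π x₁) p := dist_nonneg
    have hn2 : 0 ≤ dist (π x₂) q := dist_nonneg
    linarith [hs1, ht2]
  intro s hs t ht h1 h2
  rcases le_total s t with hst | hst
  · have := key s hs t ht hst h1 h2
    linarith [dist_nonneg (x := π x₁) (y := π x₂)]
  · rw [dist_comm]
    have := key t ht s hs hst h2 h1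
    linarith [dist_nonneg (x := π x₁) (y := π x₂)]
end

section
/- Properties (AP'1) and (AP'2) imply (AP1): if π_P : X → P satisfies d(x, π_P(x)) ≤ d(x,P) + C for all x, and d(x₁,x₂) ≥ d(x₁,π_P(x₁)) + d(π_P(x₁),π_P(x₂)) + d(π_P(x₂),x₂) − C whenever d(π_P(x₁),π_P(x₂)) ≥ C, then there is a constant C' depending only on C such that d(x,p) ≥ d(x,π_P(x)) + d(π_P(x),p) − C' for all x ∈ X and p ∈ P. -/
open Metric Set

/-- (AP'1) + (AP'2) imply (AP1), with constant `3C` (depending only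
on `C`). -/
theorem stmt8 {X : Type*} [MetricSpace X]
    (Pset : Set X) (hP : Pset.Nonempty) (π : X → X) (C : ℝ) (hC : 0 ≤ C)
    (hmaps : ∀ x, π x ∈ Pset)
    (hAP'1 : ∀ x, dist x (π x) ≤ Metric.infDist x Pset + C)
    (hAP'2 : ∀ x₁ x₂ : X, C ≤ dist (π x₁) (π x₂) →
      dist x₁ (π x₁) + dist (π x₁) (π x₂) + dist (π x₂) x₂ - C ≤ dist x₁ x₂) :
    ∀ x, ∀ p ∈ Pset, dist x (π x) + dist (π x) p - 3 * C ≤ dist x p := by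
  intro x p hp
  have hpπ : dist p (π p) ≤ C := by
    have := hAP'1 p
    rwa [Metric.infDist_zero_of_mem hp, zero_add] at this
  have htri : dist (π x) p ≤ dist (π x) (π p) + dist (π p) p := dist_triangle _ _ _
  by_cases h : C ≤ dist (π x) (π p)
  · have h2 := hAP'2 x p h
    have : dist (π x) (π p) ≥ dist (π x) p - C := by
      rw [dist_comm (π p) p] at htri; linarith
    linarith
  · push_neg at h
    have h3 : dist (π x) p ≤ 2 * C := by
      rw [dist_comm (π p) p] at htri; linarith
    have h4 : Metric.infDist x Pset ≤ dist x p := Metric.infDist_le_dist_of_mem hp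
    have := hAP'1 x
    linarith
end

section
/- (AP1) and (AP2) imply (AP'2): let π_P : X → P satisfy (AP1) and (AP2) with constant C in a geodesic space X. If d(π_P(x₁), π_P(x₂)) ≥ 8C + 1, then d(x₁,x₂) ≥ d(x₁,π_P(x₁)) + d(π_P(x₁),π_P(x₂)) + d(π_P(x₂),x₂) − C'' for some constant C'' depending only on C. -/
open Metric Set

/-- (AP1) + (AP2) imply (AP'2): there is `C''` depending only on `C`
such that whenever `d(π_P x₁, π_P x₂) ≥ 8C + 1`,
`d(x₁,x₂) ≥ d(x₁,π_P x₁) + d(π_P x₁, π_P x₂) + d(π_P x₂, x₂) - C''`. -/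
theorem stmt9 (C : ℝ) (hC : 0 < C) :
    ∃ C'' : ℝ, ∀ (X : Type) [MetricSpace X], GeodesicSpace X →
      ∀ (Pset : Set X) (π : X → X), Pset.Nonempty →
      (∀ x, π x ∈ Pset) →
      (∀ x, ∀ p ∈ Pset, dist x (π x) + dist (π x) p - C ≤ dist x p) →
      (∀ x : X, Metric.diam (π '' Metric.closedBall x (Metric.infDist x Pset)) ≤ C) →
      ∀ x₁ x₂ : X, 8 * C + 1 ≤ dist (π x₁) (π x₂) →
        dist x₁ (π x₁) + dist (π x₁) (π x₂) + dist (π x₂) x₂ - C'' ≤ dist x₁ x₂ := by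
  refine ⟨8 * C, ?_⟩
  intro X _ hgeo Pset π hPne hπmem hAP1 hAP2 x₁ x₂ hfar
  by_contra hcon
  push_neg at hcon
  obtain ⟨γ, hγ0, hγT, hgeod⟩ := hgeo x₁ x₂
  set T : ℝ := dist x₁ x₂ with hT
  have hT0 : (0:ℝ) ≤ T := dist_nonneg
  -- lower bound on infDist via infDist_lt_iff
  have hle_inf : ∀ (x : X) (d : ℝ), (∀ p ∈ Pset, d ≤ dist x p) → d ≤ infDist x Pset := by
    intro x d h
    by_contra hlt
    push_neg at hlt
    obtain ⟨y, hy, hxy⟩ := (infDist_lt_iff hPne).1 hlt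
    exact absurd (h y hy) (by linarith)
  -- d(x, πx) ≤ infDist x P + C
  have hπclose : ∀ x : X, dist x (π x) ≤ infDist x Pset + C := by
    intro x
    have h : dist x (π x) - C ≤ infDist x Pset := by
      apply hle_inf
      intro p hp
      have := hAP1 x p hp
      have := dist_nonneg (x := π x) (y := p)
      linarith
    linarith
  have hπfar : ∀ x : X, infDist x Pset ≤ dist x (π x) :=
    fun x => infDist_le_dist_of_mem (hπmem x)
  -- AP2 step lemma: points within infDist-ball have C-close projections
  have hstep : ∀ x y : X, dist x y ≤ infDist x Pset →
      dist (π x) (π y) ≤ C := by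
    intro x y hxy
    have hr0 : (0:ℝ) ≤ infDist x Pset := infDist_nonneg
    have hxmem : x ∈ closedBall x (infDist x Pset) := mem_closedBall_self hr0
    have hymem : y ∈ closedBall x (infDist x Pset) := by
      rw [mem_closedBall, dist_comm]
      exact hxy
    have hbdd : Bornology.IsBounded (π '' closedBall x (infDist x Pset)) := by
      apply (isBounded_closedBall (x := x) (r := 3 * infDist x Pset + C)).subset
      rintro _ ⟨z, hz, rfl⟩
      rw [mem_closedBall] at hz ⊢
      have h1 : dist z (π z) ≤ infDist z Pset + C := hπclose z
      have h2 : infDist z Pset ≤ infDist x Pset + dist z x := infDist_le_infDist_add_dist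
      have h3 : dist (π z) x ≤ dist (π z) z + dist z x := dist_triangle _ _ _
      have h4 : dist (π z) z = dist z (π z) := dist_comm _ _
      linarith
    calc dist (π x) (π y) ≤ diam (π '' closedBall x (infDist x Pset)) :=
          dist_le_diam_of_mem hbdd ⟨x, hxmem, rfl⟩ ⟨y, hymem, rfl⟩
      _ ≤ C := hAP2 x
  -- geodesic distances
  have hd1 : ∀ t ∈ Icc (0:ℝ) T, dist x₁ (γ t) = t := by
    intro t ht
    have := hgeod 0 ⟨le_refl 0, hT0⟩ t ht
    rw [hγ0] at this
    rw [this, abs_of_nonpos (by linarith [ht.1])]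
    ring
  have hd2 : ∀ t ∈ Icc (0:ℝ) T, dist (γ t) x₂ = T - t := by
    intro t ht
    have := hgeod t ht T ⟨hT0, le_refl T⟩
    rw [hγT] at this
    rw [this, abs_of_nonpos (by linarith [ht.2])]
    ring
  -- every point of the geodesic is > 3C from its projection
  have hfar2 : ∀ t ∈ Icc (0:ℝ) T, 3 * C < dist (γ t) (π (γ t)) := by
    intro t ht
    have a1 := hAP1 x₁ (π (γ t)) (hπmem _)
    have a2 := hAP1 x₂ (π (γ t)) (hπmem _)
    have tri1 : dist x₁ (π (γ t)) ≤ dist x₁ (γ t) + dist (γ t) (π (γ t)) :=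
      dist_triangle _ _ _
    have tri2 : dist x₂ (π (γ t)) ≤ dist x₂ (γ t) + dist (γ t) (π (γ t)) :=
      dist_triangle _ _ _
    have triD : dist (π x₁) (π x₂) ≤ dist (π x₁) (π (γ t)) + dist (π (γ t)) (π x₂) :=
      dist_triangle _ _ _
    have e1 := hd1 t ht
    have e2 := hd2 t ht
    rw [dist_comm x₂ (γ t)] at tri2
    rw [dist_comm (π x₂) (π (γ t))] at a2
    rw [dist_comm x₂ (π x₂)] at a2
    -- T = t + (T - t) ≥ A + B + D - 2C - 2 d(γt, πγt)
    nlinarith [dist_nonneg (x := γ t) (y := π (γ t))]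
  have hρ : ∀ t ∈ Icc (0:ℝ) T, 2 * C < infDist (γ t) Pset := by
    intro t ht
    have h1 := hfar2 t ht
    have h2 := hπclose (γ t)
    linarith
  -- endpoints far from Pset
  have hr0A : dist x₁ (π x₁) - C ≤ infDist x₁ Pset := by
    apply hle_inf
    intro p hp
    have := hAP1 x₁ p hp
    have := dist_nonneg (x := π x₁) (y := p)
    linarith
  have hrTB : dist x₂ (π x₂) - C ≤ infDist x₂ Pset := by
    apply hle_inf
    intro p hp
    have := hAP1 x₂ p hp
    have := dist_nonneg (x := π x₂) (y := p)
    linarith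
  -- if T fits inside one ball, contradiction
  have hbig : ∀ x : X, ¬ (dist (π x₁) (π x₂) ≤ C) := by
    intro x h
    linarith
  by_cases hc1 : T ≤ infDist x₁ Pset
  · apply hbig x₁
    exact hstep x₁ x₂ hc1
  push_neg at hc1
  by_cases hc2 : T ≤ infDist x₂ Pset
  · apply hbig x₁
    have hd : dist x₂ x₁ ≤ infDist x₂ Pset := by rwa [dist_comm]
    have := hstep x₂ x₁ hd
    rw [dist_comm] at this
    exact this
  push_neg at hc2
  -- induction: projection moves slowly along the geodesic
  set r0 : ℝ := infDist x₁ Pset with hr0def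
  have hr0pos : 2 * C < r0 := by
    have := hρ 0 ⟨le_refl 0, hT0⟩
    rwa [hγ0] at this
  have hclaim : ∀ n : ℕ, ∀ t ∈ Icc (0:ℝ) T, t ≤ r0 + n * (2 * C) →
      dist (π x₁) (π (γ t)) ≤ C * (n + 1) := by
    intro n
    induction n with
    | zero =>
      intro t ht hle
      have h : dist x₁ (γ t) ≤ infDist x₁ Pset := by
        rw [hd1 t ht]; simpa using hle
      have := hstep x₁ (γ t) h
      simpa using this
    | succ n ih =>
      intro t ht hle
      by_cases hcase : t ≤ r0 + n * (2 * C)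
      · have := ih t ht hcase
        have : dist (π x₁) (π (γ t)) ≤ C * (n + 1) := this
        have hCpos : (0:ℝ) < C := hC
        push_cast
        push_cast at this
        linarith
      · push_neg at hcase
        have hn0 : (0:ℝ) ≤ (n:ℝ) * (2 * C) := by positivity
        have ht' : t - 2 * C ∈ Icc (0:ℝ) T := by
          constructor
          · linarith
          · linarith [ht.2, hC]
        have hle' : t - 2 * C ≤ r0 + n * (2 * C) := by push_cast at hle; linarith
        have ih' := ih (t - 2 * C) ht' hle'
        have hstep' : dist (π (γ (t - 2 * C))) (π (γ t)) ≤ C := by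
          apply hstep
          have := hgeod (t - 2 * C) ht' t ht
          rw [this, abs_of_nonpos (by linarith)]
          have := hρ (t - 2 * C) ht'
          linarith
        have tri := dist_triangle (π x₁) (π (γ (t - 2 * C))) (π (γ t))
        push_cast
        push_cast at ih'
        linarith
  -- assemble
  set rT : ℝ := infDist x₂ Pset with hrTdef
  set tstar : ℝ := T - rT with htstar
  have hrT0 : (0:ℝ) ≤ rT := infDist_nonneg
  have htsmem : tstar ∈ Icc (0:ℝ) T := ⟨by simp only [htstar]; linarith, by simp only [htstar]; linarith⟩
  have hlast : dist (π (γ tstar)) (π x₂) ≤ C := by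
    have h : dist x₂ (γ tstar) ≤ rT := by
      rw [← hγT]
      have := hgeod T ⟨hT0, le_refl T⟩ tstar htsmem
      rw [this, abs_of_nonneg (by simp only [htstar]; linarith)]
      simp [htstar]
    have := hstep x₂ (γ tstar) h
    rw [dist_comm]
    exact this
  set D : ℝ := dist (π x₁) (π x₂) with hD
  have hDlarge : 8 * C + 1 ≤ D := hfar
  -- choose n
  set n : ℕ := ⌈(tstar - r0) / (2 * C)⌉₊ with hn
  have h2C : (0:ℝ) < 2 * C := by linarith
  have hts_le : tstar ≤ r0 + n * (2 * C) := by
    have h1 : (tstar - r0) / (2 * C) ≤ (n : ℝ) := Nat.le_ceil _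
    have := (div_le_iff₀ h2C).1 h1
    linarith
  have hmid : dist (π x₁) (π (γ tstar)) ≤ C * (n + 1) := hclaim n tstar htsmem hts_le
  -- bound on n
  have hA : dist x₁ (π x₁) - C ≤ r0 := hr0A
  have hB : dist x₂ (π x₂) - C ≤ rT := hrTB
  have hts_ub : tstar - r0 ≤ D - 6 * C := by
    have : T < dist x₁ (π x₁) + D + dist (π x₂) x₂ - 8 * C := hcon
    have hBc : dist (π x₂) x₂ = dist x₂ (π x₂) := dist_comm _ _
    simp only [htstar]
    linarith
  have hDpos : (0:ℝ) ≤ (D - 6 * C) / (2 * C) := by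
    apply div_nonneg _ (le_of_lt h2C)
    linarith
  have hnle : (n : ℝ) ≤ (D - 6 * C) / (2 * C) + 1 := by
    have hmono : ((tstar - r0) / (2 * C)) ≤ (D - 6 * C) / (2 * C) := by
      gcongr
    have : (n : ℝ) ≤ (⌈(D - 6 * C) / (2 * C)⌉₊ : ℝ) := by
      exact_mod_cast Nat.cast_le.2 (Nat.ceil_mono hmono)
    have hceil : (⌈(D - 6 * C) / (2 * C)⌉₊ : ℝ) < (D - 6 * C) / (2 * C) + 1 :=
      Nat.ceil_lt_add_one hDpos
    linarith
  -- final contradiction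
  have hfinal : D ≤ C * (n + 1) + C := by
    have := dist_triangle (π x₁) (π (γ tstar)) (π x₂)
    linarith
  have hCn : C * ((n : ℝ) + 1) + C ≤ D / 2 := by
    have h1 : C * ((n:ℝ) + 2) ≤ C * ((D - 6 * C) / (2 * C) + 3) := by
      apply mul_le_mul_of_nonneg_left _ (le_of_lt hC)
      linarith
    have h2 : C * ((D - 6 * C) / (2 * C) + 3) = (D - 6 * C) / 2 + 3 * C := by
      field_simp
    have : C * ((n:ℝ) + 1) + C = C * ((n:ℝ) + 2) := by ring
    rw [this]
    rw [h2] at h1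
    linarith
  linarith
end

section
/- In a complete geodesic metric space X, if π_P : X → P satisfies (P'1) and (P'2), then π_P is locally constant outside P: for every z ∉ P there is ε > 0 such that π_P is constant on the open ball of radius ε around z. -/
open Metric Set

/-- (P'1) + (P'2) imply that `π_P` is locally constant outside `P`. -/
theorem stmt12 {X : Type*} [MetricSpace X] [CompleteSpace X] (hX : GeodesicSpace X)
    (Pset : Set X) (hP : Pset.Nonempty) (hPc : IsClosed Pset) (π : X → X)
    (hmaps : ∀ x, π x ∈ Pset)
    (hP'1 : ∀ x ∈ Pset, π x = x)
    (hP'2 : ∀ z₁ z₂ : X, π z₁ ≠ π z₂ →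
      dist z₁ z₂ = dist z₁ (π z₁) + dist (π z₁) (π z₂) + dist (π z₂) z₂) :
    ∀ z : X, z ∉ Pset → ∃ ε > 0, ∀ w ∈ Metric.ball z ε, π w = π z := by
  intro z hz
  have hne : z ≠ π z := by
    intro h
    exact hz (h ▸ hmaps z)
  have hpos : 0 < dist z (π z) := dist_pos.mpr hne
  refine ⟨dist z (π z), hpos, ?_⟩
  intro w hw
  by_contra hne2
  have key := hP'2 w z hne2
  have h1 : 0 ≤ dist w (π w) := dist_nonneg
  have h2 : 0 ≤ dist (π w) (π z) := dist_nonneg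
  have h3 : dist (π z) z = dist z (π z) := dist_comm _ _
  have h4 : dist w z = dist z w := dist_comm _ _
  have hw' : dist z w < dist z (π z) := by simpa [Metric.mem_ball, dist_comm] using hw
  linarith
end

section
/- In a complete geodesic metric space X, if π_P : X → P satisfies (P1) (for each r ∈ P, z ∈ X: d(r,z) = d(r,π_P(z)) + d(π_P(z),z)) and (P2) (π_P is locally constant outside P), then π_P satisfies (P'2): for z₁,z₂ with π_P(z₁) ≠ π_P(z₂), d(z₁,z₂) = d(z₁,π_P(z₁)) + d(π_P(z₁),π_P(z₂)) + d(π_P(z₂),z₂). -/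
open Metric Set

/-!
Join `z₁` to `z₂` by a geodesic `γ` of length `L`. If `γ` avoided `P`, then `π ∘ γ` would be
locally constant on `[0, L]` by (P2), hence constant, contradicting `π z₁ ≠ π z₂`. Otherwise let
`t₁ ≤ t₂` be the first and last times at which `γ` lies in `P`. On `[0, t₁)` the map `π ∘ γ` is
constant, and by (P1) `d(γ t₁, π z₁) ≤ d(γ t₁, γ t) = t₁ - t` for all `t < t₁`, so `π z₁ = γ t₁`;
symmetrically `π z₂ = γ t₂`. The identity is then additivity of length along `γ`.
-/

open Filter Topology

theorem IsPreconnected.apply_eq_of_eventually_eq {α β : Type*} [TopologicalSpace α] {s : Set α}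
    (hs : IsPreconnected s) {f : α → β} (hf : ∀ x ∈ s, ∀ᶠ y in 𝓝[s] x, f y = f x)
    {x y : α} (hx : x ∈ s) (hy : y ∈ s) : f x = f y := by
  have := isPreconnected_iff_preconnectedSpace.mp hs
  have hloc : IsLocallyConstant (s.domRestrict f) :=
    (IsLocallyConstant.iff_eventually_eq _).2 fun z =>
      (eventually_nhds_subtype_iff s z (fun y => f y = f z)).2 (hf z z.2)
  exact hloc.apply_eq_of_preconnectedSpace ⟨x, hx⟩ ⟨y, hy⟩

namespace IsGeodesicOn

variable {X : Type*} [MetricSpace X] {γ : ℝ → X} {a b : ℝ}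

theorem dist_eq_sub (hγ : IsGeodesicOn γ a b) {s t : ℝ} (hs : s ∈ Icc a b) (ht : t ∈ Icc a b)
    (hst : s ≤ t) : dist (γ s) (γ t) = t - s := by
  rw [hγ s hs t ht, abs_sub_comm, abs_of_nonneg (sub_nonneg.2 hst)]

theorem continuousOn (hγ : IsGeodesicOn γ a b) : ContinuousOn γ (Icc a b) :=
  LipschitzOnWith.continuousOn (K := 1) <| LipschitzOnWith.of_dist_le_mul fun s hs t ht => by
    rw [hγ s hs t ht, NNReal.coe_one, one_mul, Real.dist_eq]

theorem mono (hγ : IsGeodesicOn γ a b) {a' b' : ℝ} (ha : a ≤ a') (hb : b' ≤ b) :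
    IsGeodesicOn γ a' b' := fun s hs t ht =>
  hγ s (Icc_subset_Icc ha hb hs) t (Icc_subset_Icc ha hb ht)

theorem reverse (hγ : IsGeodesicOn γ a b) : IsGeodesicOn (fun s => γ (a + b - s)) a b := by
  intro s hs t ht
  rw [hγ _ ⟨by linarith [hs.2], by linarith [hs.1]⟩ _ ⟨by linarith [ht.2], by linarith [ht.1]⟩,
    show a + b - s - (a + b - t) = -(s - t) by ring, abs_neg]

end IsGeodesicOn

section Projection

variable {X : Type*} [MetricSpace X] {P : Set X} {π : X → X}

theorem proj_eq_self (hP1 : ∀ r ∈ P, ∀ z : X, dist r z = dist r (π z) + dist (π z) z)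
    {p : X} (hp : p ∈ P) : π p = p := by
  have h := hP1 p hp p
  rw [dist_self, dist_comm (π p)] at h
  exact (dist_le_zero.1 (by linarith [dist_nonneg (x := p) (y := π p)])).symm

theorem dist_proj_le (hP1 : ∀ r ∈ P, ∀ z : X, dist r z = dist r (π z) + dist (π z) z)
    {r : X} (hr : r ∈ P) (z : X) : dist r (π z) ≤ dist r z := by
  rw [hP1 r hr z]
  exact le_add_of_nonneg_right dist_nonneg

theorem proj_comp_eq_of_forall_notMem
    (hP2 : ∀ z : X, z ∉ P → ∃ ε > 0, ∀ w ∈ Metric.ball z ε, π w = π z)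
    {γ : ℝ → X} {s : Set ℝ} (hs : IsPreconnected s) (hγ : ContinuousOn γ s)
    (hout : ∀ t ∈ s, γ t ∉ P) {t u : ℝ} (ht : t ∈ s) (hu : u ∈ s) : π (γ t) = π (γ u) := by
  refine hs.apply_eq_of_eventually_eq (f := π ∘ γ) (fun v hv => ?_) ht hu
  obtain ⟨ε, hε, hball⟩ := hP2 (γ v) (hout v hv)
  filter_upwards [hγ v hv (ball_mem_nhds (γ v) hε)] with w hw using hball (γ w) hw

variable (hP1 : ∀ r ∈ P, ∀ z : X, dist r z = dist r (π z) + dist (π z) z)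
  (hP2 : ∀ z : X, z ∉ P → ∃ ε > 0, ∀ w ∈ Metric.ball z ε, π w = π z)
  {γ : ℝ → X} {a b : ℝ}
include hP1 hP2

theorem proj_eq_of_first_hit (hγ : IsGeodesicOn γ a b) (hab : a ≤ b) (hb : γ b ∈ P)
    (hout : ∀ s ∈ Ico a b, γ s ∉ P) : π (γ a) = γ b := by
  rcases hab.eq_or_lt with rfl | hlt
  · exact proj_eq_self hP1 hb
  have hIco : ContinuousOn γ (Ico a b) := hγ.continuousOn.mono Ico_subset_Icc_self
  have hclose : ∀ t ∈ Ico a b, dist (γ b) (π (γ a)) ≤ b - t := fun t ht => calc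
    dist (γ b) (π (γ a)) = dist (γ b) (π (γ t)) := by
      rw [proj_comp_eq_of_forall_notMem hP2 isPreconnected_Ico hIco hout ht (left_mem_Ico.2 hlt)]
    _ ≤ dist (γ b) (γ t) := dist_proj_le hP1 hb _
    _ = b - t := by
      rw [dist_comm, hγ.dist_eq_sub (Ico_subset_Icc_self ht) (right_mem_Icc.2 hab) ht.2.le]
  refine (dist_le_zero.1 (le_of_forall_pos_le_add fun ε hε => ?_)).symm
  have ht : max a (b - ε) ∈ Ico a b := ⟨le_max_left _ _, max_lt hlt (by linarith)⟩
  linarith [hclose _ ht, le_max_right a (b - ε)]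

theorem proj_eq_of_last_hit (hγ : IsGeodesicOn γ a b) (hab : a ≤ b) (ha : γ a ∈ P)
    (hout : ∀ s ∈ Ioc a b, γ s ∉ P) : π (γ b) = γ a := by
  have h := proj_eq_of_first_hit hP1 hP2 hγ.reverse hab (by rwa [add_sub_cancel_right])
    fun s hs => hout _ ⟨by linarith [hs.2], by linarith [hs.1]⟩
  simpa only [add_sub_cancel_right, add_sub_cancel_left] using h

end Projection

theorem stmt13_general {X : Type*} [MetricSpace X] (hX : GeodesicSpace X)
    (Pset : Set X) (hPc : IsClosed Pset)
    (π : X → X)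
    (hP1 : ∀ r ∈ Pset, ∀ z : X, dist r z = dist r (π z) + dist (π z) z)
    (hP2 : ∀ z : X, z ∉ Pset → ∃ ε > 0, ∀ w ∈ Metric.ball z ε, π w = π z) :
    ∀ z₁ z₂ : X, π z₁ ≠ π z₂ →
      dist z₁ z₂ = dist z₁ (π z₁) + dist (π z₁) (π z₂) + dist (π z₂) z₂ := by
  intro z₁ z₂ hne
  obtain ⟨γ, hγ0, hγL, hγ⟩ := hX z₁ z₂
  set L := dist z₁ z₂
  have hL : 0 ≤ L := dist_nonneg
  set S := Icc 0 L ∩ γ ⁻¹' Pset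
  rcases S.eq_empty_or_nonempty with hS | hS
  · refine absurd ?_ hne
    rw [← hγ0, ← hγL]
    exact proj_comp_eq_of_forall_notMem hP2 isPreconnected_Icc hγ.continuousOn
      (fun t ht htP => hS.subset ⟨ht, htP⟩) (left_mem_Icc.2 hL) (right_mem_Icc.2 hL)
  have hScpt : IsCompact S := isCompact_Icc.of_isClosed_subset
    (hγ.continuousOn.preimage_isClosed_of_isClosed isClosed_Icc hPc) inter_subset_left
  obtain ⟨t₁, ⟨⟨ht₁0, ht₁L⟩, ht₁P⟩, ht₁min⟩ := hScpt.exists_isLeast hS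
  obtain ⟨t₂, ⟨⟨-, ht₂L⟩, ht₂P⟩, ht₂max⟩ := hScpt.exists_isGreatest hS
  have ht₁₂ : t₁ ≤ t₂ := ht₂max ⟨⟨ht₁0, ht₁L⟩, ht₁P⟩
  have h₁ : π z₁ = γ t₁ := hγ0 ▸ proj_eq_of_first_hit hP1 hP2 (hγ.mono le_rfl ht₁L)
    ht₁0 ht₁P fun s hs hsP => (ht₁min ⟨⟨hs.1, by linarith [hs.2]⟩, hsP⟩).not_gt hs.2
  have h₂ : π z₂ = γ t₂ := hγL ▸ proj_eq_of_last_hit hP1 hP2 (hγ.mono (ht₁0.trans ht₁₂) le_rfl)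
    ht₂L ht₂P fun s hs hsP => (ht₂max ⟨⟨by linarith [hs.1], hs.2⟩, hsP⟩).not_gt hs.1
  rw [h₁, h₂, ← hγ0, ← hγL, hγ.dist_eq_sub ⟨le_rfl, hL⟩ ⟨ht₁0, ht₁L⟩ ht₁0,
    hγ.dist_eq_sub ⟨ht₁0, ht₁L⟩ ⟨ht₁0.trans ht₁₂, ht₂L⟩ ht₁₂,
    hγ.dist_eq_sub ⟨ht₁0.trans ht₁₂, ht₂L⟩ ⟨hL, le_rfl⟩ ht₂L]
  ring

/-- (P1) + (P2) imply (P'2), for a closed geodesic subset `P`. -/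
theorem stmt13 {X : Type*} [MetricSpace X] [CompleteSpace X] (hX : GeodesicSpace X)
    (Pset : Set X) (hP : Pset.Nonempty) (hPc : IsClosed Pset)
    (hPgeo : ∀ p ∈ Pset, ∀ q ∈ Pset, ∃ γ : ℝ → X, γ 0 = p ∧ γ (dist p q) = q ∧
      IsGeodesicOn γ 0 (dist p q) ∧ ∀ t ∈ Set.Icc 0 (dist p q), γ t ∈ Pset)
    (π : X → X)
    (hmaps : ∀ x, π x ∈ Pset)
    (hP1 : ∀ r ∈ Pset, ∀ z : X, dist r z = dist r (π z) + dist (π z) z)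
    (hP2 : ∀ z : X, z ∉ Pset → ∃ ε > 0, ∀ w ∈ Metric.ball z ε, π w = π z) :
    ∀ z₁ z₂ : X, π z₁ ≠ π z₂ →
      dist z₁ z₂ = dist z₁ (π z₁) + dist (π z₁) (π z₂) + dist (π z₂) z₂ :=
  stmt13_general hX Pset hPc π hP1 hP2
end
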